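/- arXiv:1004.2437 — 2 statements merged into one kernel-verified Lean document; each statement's English description precedes it below -/
import Mathlib

section
/- ∫₀¹ log(x)/(x²-x+1) dx = -(2/√3) ∑_{k=1}^∞ sin(πk/3)/k². -/
/-!
Since `(1 + x)(1 - x³)(x² - x + 1) = 1 - x⁶`, expanding `1 / (1 - x⁶)` geometrically writes
`log x / (x² - x + 1)` on `(0, 1]` as a series of nonpositive functions
`x^(6m) (1 + x - x³ - x⁴) log x`, which may be integrated termwise (dominated convergence)
using `∫₀¹ xⁿ log x = -1/(n+1)²`. On the other side `sin (kπ/3)` is `6`-periodic with values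
`(√3/2)(1, 1, 0, -1, -1, 0)`, so grouping the series in blocks of six yields the same
coefficients up to the factor `-√3/2`.
-/

open Real MeasureTheory Set intervalIntegral Interval

noncomputable section

theorem HasSum.sum_range_blocks {α : Type*} [AddCommMonoid α] [TopologicalSpace α]
    [ContinuousAdd α] [RegularSpace α] {f : ℕ → α} {a : α} (hf : HasSum f a) (N : ℕ) [NeZero N] :
    HasSum (fun m ↦ ∑ j ∈ Finset.range N, f (N * m + j)) a := by
  refine ((Nat.divModEquiv N).symm.hasSum_iff.mpr hf).prod_fiberwise fun m ↦ ?_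
  simpa [← Fin.sum_univ_eq_sum_range, mul_comm] using hasSum_fintype _

lemma summable_sin_div_sq (g : ℕ → ℝ) : Summable fun k : ℕ ↦ sin (g k) / ((k : ℝ) + 1) ^ 2 := by
  have h : Summable fun k : ℕ ↦ 1 / ((k : ℝ) + 1) ^ 2 := by
    exact_mod_cast (summable_nat_add_iff 1).2 (summable_one_div_nat_pow.2 one_lt_two)
  refine h.of_norm_bounded fun k ↦ ?_
  rw [norm_div, norm_pow, Real.norm_of_nonneg (by positivity : (0 : ℝ) ≤ k + 1)]
  gcongr
  exact abs_sin_le_one _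

lemma intervalIntegrable_pow_mul_log (n : ℕ) (a b : ℝ) :
    IntervalIntegrable (fun x ↦ x ^ n * log x) volume a b :=
  intervalIntegrable_log'.continuousOn_mul (continuous_pow n).continuousOn

lemma integral_pow_mul_log (n : ℕ) :
    ∫ x in (0 : ℝ)..1, x ^ n * log x = -1 / ((n : ℝ) + 1) ^ 2 := by
  -- `x ^ (n + 1) * log x` written so that its continuity at `0` is visible
  set F : ℝ → ℝ := fun x ↦ x ^ n * (x * log x) / (n + 1) - x ^ (n + 1) / (n + 1) ^ 2
  have hF_cont : ContinuousOn F (Icc 0 1) := by fun_prop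
  have hF_deriv : ∀ x ∈ Ioo (0 : ℝ) 1, HasDerivAt F (x ^ n * log x) x := by
    intro x hx
    have h := (((hasDerivAt_pow n x).mul (hasDerivAt_mul_log hx.1.ne')).div_const
      ((n : ℝ) + 1)).sub ((hasDerivAt_pow (n + 1) x).div_const (((n : ℝ) + 1) ^ 2))
    refine h.congr_deriv ?_
    have hpow : (n : ℝ) * x ^ (n - 1) * x = n * x ^ n := by
      rcases n with _ | n <;> simp [pow_succ, mul_assoc]
    simp only [Nat.add_sub_cancel, Nat.cast_succ]
    field_simp
    linear_combination (log x) * hpow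
  rw [integral_eq_sub_of_hasDerivAt_of_le zero_le_one hF_cont hF_deriv
    (intervalIntegrable_pow_mul_log n 0 1)]
  simp [F]
  field_simp

lemma sq_sub_self_add_one_pos (x : ℝ) : 0 < x ^ 2 - x + 1 := by
  nlinarith [sq_nonneg (2 * x - 1)]

-- `(2/√3) ∑_{j=1}^{6} sin (jπ/3) / (6m + j)²`
def clausenBlock (m : ℕ) : ℝ :=
  1 / (6 * m + 1 : ℝ) ^ 2 + 1 / (6 * m + 2 : ℝ) ^ 2 - 1 / (6 * m + 4 : ℝ) ^ 2
    - 1 / (6 * m + 5 : ℝ) ^ 2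

def logBlock (m : ℕ) (x : ℝ) : ℝ := x ^ (6 * m) * (1 + x - x ^ 3 - x ^ 4) * log x

lemma logBlock_eq (m : ℕ) : logBlock m = fun x ↦
    x ^ (6 * m) * log x + x ^ (6 * m + 1) * log x - x ^ (6 * m + 3) * log x
      - x ^ (6 * m + 4) * log x := by
  ext x
  simp only [logBlock, pow_add]
  ring

lemma integral_logBlock (m : ℕ) : ∫ x in (0 : ℝ)..1, logBlock m x = -clausenBlock m := by
  have h := intervalIntegrable_pow_mul_log
  rw [logBlock_eq, integral_sub ((h _ 0 1).add (h _ 0 1) |>.sub (h _ 0 1)) (h _ 0 1),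
    integral_sub ((h _ 0 1).add (h _ 0 1)) (h _ 0 1), integral_add (h _ 0 1) (h _ 0 1)]
  simp only [integral_pow_mul_log, clausenBlock]
  push_cast
  ring

lemma logBlock_nonpos (m : ℕ) {x : ℝ} (hx : x ∈ Icc (0 : ℝ) 1) : logBlock m x ≤ 0 := by
  have h3 : x ^ 3 ≤ 1 := pow_le_one₀ hx.1 hx.2
  have hpoly : 0 ≤ 1 + x - x ^ 3 - x ^ 4 := by
    linarith [mul_nonneg (by linarith [hx.1] : 0 ≤ 1 + x) (sub_nonneg.2 h3)]
  exact mul_nonpos_of_nonneg_of_nonpos (by have := pow_nonneg hx.1 (6 * m); positivity)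
    (log_nonpos hx.1 hx.2)

lemma hasSum_logBlock {x : ℝ} (hx : |x| < 1) :
    HasSum (fun m ↦ logBlock m x) (log x / (x ^ 2 - x + 1)) := by
  have hx6 : x ^ 6 < 1 := by
    simpa [pow_abs, Even.pow_abs (by decide : Even 6)] using
      pow_lt_one₀ (abs_nonneg x) hx (by norm_num : 6 ≠ 0)
  have hterm : (fun m ↦ logBlock m x) =
      fun m ↦ (x ^ 6) ^ m * ((1 + x - x ^ 3 - x ^ 4) * log x) := by
    ext m
    rw [logBlock, ← pow_mul]
    ring
  have hsum : log x / (x ^ 2 - x + 1) = (1 - x ^ 6)⁻¹ * ((1 + x - x ^ 3 - x ^ 4) * log x) := by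
    rw [inv_mul_eq_div, div_eq_div_iff (sq_sub_self_add_one_pos x).ne' (by linarith)]
    ring
  rw [hterm, hsum]
  exact (hasSum_geometric_of_lt_one (by positivity) hx6).mul_right _

lemma hasSum_neg_clausenBlock :
    HasSum (fun m ↦ -clausenBlock m) (∫ x in (0 : ℝ)..1, log x / (x ^ 2 - x + 1)) := by
  have hΙ : Ι (0 : ℝ) 1 = Ioc 0 1 := uIoc_of_le zero_le_one
  have hsum : ∀ x ∈ Ι (0 : ℝ) 1, HasSum (fun m ↦ logBlock m x) (log x / (x ^ 2 - x + 1)) := by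
    rw [hΙ]
    rintro x ⟨hx0, hx1⟩
    rcases hx1.eq_or_lt with rfl | hx1
    · simp [logBlock]
    · exact hasSum_logBlock (abs_lt.2 ⟨by linarith, hx1⟩)
  have hint : IntervalIntegrable (fun x ↦ log x / (x ^ 2 - x + 1)) volume 0 1 := by
    simp_rw [div_eq_mul_inv]
    exact intervalIntegrable_log'.mul_continuousOn
      (ContinuousOn.inv₀ (by fun_prop) fun x _ ↦ (sq_sub_self_add_one_pos x).ne')
  simp_rw [← integral_logBlock]
  refine intervalIntegral.hasSum_integral_of_dominated_convergence (fun m x ↦ -logBlock m x)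
    (fun m ↦ ?_) (fun m ↦ ?_) (.of_forall fun x hx ↦ (hsum x hx).neg.summable) ?_
    (.of_forall hsum)
  · unfold logBlock
    fun_prop
  · refine .of_forall fun x hx ↦ ?_
    rw [hΙ] at hx
    rw [norm_of_nonpos (logBlock_nonpos m (Ioc_subset_Icc_self hx))]
  · exact hint.neg.congr fun x hx ↦ ((hsum x hx).neg.tsum_eq).symm

lemma sum_range_six_sin_div_sq (m : ℕ) :
    ∑ j ∈ Finset.range 6,
        sin (π * (((6 * m + j : ℕ) : ℝ) + 1) / 3) / (((6 * m + j : ℕ) : ℝ) + 1) ^ 2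
      = √3 / 2 * clausenBlock m := by
  have hper (j : ℕ) :
      sin (π * (((6 * m + j : ℕ) : ℝ) + 1) / 3) = sin (π * ((j : ℝ) + 1) / 3) := by
    rw [← sin_add_int_mul_two_pi (π * ((j : ℝ) + 1) / 3) m]
    congr 1
    push_cast
    ring
  have h2 : sin (π * 2 / 3) = √3 / 2 := by
    rw [show π * 2 / 3 = π - π / 3 by ring, sin_pi_sub, sin_pi_div_three]
  have h4 : sin (π * 4 / 3) = -(√3 / 2) := by
    rw [show π * 4 / 3 = π / 3 + π by ring, sin_add_pi, sin_pi_div_three]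
  have h5 : sin (π * 5 / 3) = -(√3 / 2) := by
    rw [show π * 5 / 3 = -(π / 3) + 2 * π by ring, sin_add_two_pi, sin_neg, sin_pi_div_three]
  have h6 : sin (π * 6 / 3) = 0 := by
    rw [show π * 6 / 3 = 2 * π by ring, sin_two_pi]
  simp only [Finset.sum_range_succ, Finset.sum_range_zero, hper]
  norm_num [h2, h4, h5, h6, clausenBlock]
  ring

theorem stmt2 :
    ∫ x in (0:ℝ)..1, Real.log x / (x ^ 2 - x + 1) =
      -(2 / Real.sqrt 3) * ∑' k : ℕ, Real.sin (Real.pi * (k + 1) / 3) / ((k : ℝ) + 1) ^ 2 := by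
  have hR : HasSum (fun m ↦ √3 / 2 * clausenBlock m)
      (∑' k : ℕ, sin (π * (k + 1) / 3) / ((k : ℝ) + 1) ^ 2) := by
    simpa only [sum_range_six_sin_div_sq] using
      (summable_sin_div_sq fun k ↦ π * (k + 1) / 3).hasSum.sum_range_blocks 6
  have hL : HasSum (fun m ↦ √3 / 2 * clausenBlock m)
      (√3 / 2 * -∫ x in (0 : ℝ)..1, log x / (x ^ 2 - x + 1)) := by
    simpa using hasSum_neg_clausenBlock.neg.mul_left (√3 / 2)
  rw [hR.unique hL]
  field_simp

end
end

section
/- For -1 < a < 1, ∫₀¹ log²(x)/(x²-2ax+1) dx = 2·∑_{k=0}^∞ U_k(a)/(k+1)³. -/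
/-! For `|a| < 1` and `0 < x < 1` the generating function of the Chebyshev polynomials gives
`1 / (x² - 2ax + 1) = ∑ₖ Uₖ(a) xᵏ`, and `∫₀¹ xᵏ log² x dx = 2 / (k + 1)³`. Since
`|Uₖ(a)| ≤ 1 / √(1 - a²)` (from `Uₖ(cos θ) sin θ = sin ((k + 1) θ)`), the integrals of the
absolute values of the terms form a summable series, so sum and integral may be exchanged. -/

open Real MeasureTheory Filter Set Topology Polynomial.Chebyshev

lemma tendsto_pow_mul_log_pow_nhdsGT_zero {n : ℕ} (hn : n ≠ 0) (m : ℕ) :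
    Tendsto (fun x : ℝ => x ^ n * log x ^ m) (𝓝[>] 0) (𝓝 0) := by
  rw [tendsto_zero_iff_norm_tendsto_zero]
  have hlog := (isLittleO_abs_log_rpow_rpow_nhdsGT_zero (m : ℝ)
    (neg_lt_zero.2 (Nat.cast_pos.2 (Nat.pos_of_ne_zero hn)))).tendsto_div_nhds_zero
  refine hlog.congr' ?_
  filter_upwards [self_mem_nhdsWithin] with x (hx : 0 < x)
  rw [rpow_neg hx.le, div_inv_eq_mul, rpow_natCast, rpow_natCast, norm_mul, norm_pow, norm_pow,
    norm_of_nonneg hx.le, Real.norm_eq_abs, mul_comm]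

noncomputable def powMulLogSqPrimitive (k : ℕ) (x : ℝ) : ℝ :=
  x ^ (k + 1) * (log x ^ 2 / (k + 1) - 2 * log x / (k + 1) ^ 2 + 2 / (k + 1) ^ 3)

lemma hasDerivAt_powMulLogSqPrimitive (k : ℕ) {x : ℝ} (hx : 0 < x) :
    HasDerivAt (powMulLogSqPrimitive k) (x ^ k * log x ^ 2) x := by
  have hlog := hasDerivAt_log hx.ne'
  refine ((hasDerivAt_pow (k + 1) x).mul ((((hlog.fun_pow 2).div_const ((k:ℝ) + 1)).sub
    ((hlog.const_mul 2).div_const (((k:ℝ) + 1) ^ 2))).add_const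
      (2 / ((k:ℝ) + 1) ^ 3))).congr_deriv ?_
  simp only [Pi.sub_apply]
  push_cast
  field_simp
  ring

lemma continuousOn_powMulLogSqPrimitive (k : ℕ) :
    ContinuousOn (powMulLogSqPrimitive k) (Ici 0) := by
  intro x (hx : 0 ≤ x)
  rcases hx.eq_or_lt with rfl | hx
  · rw [← continuousWithinAt_Ioi_iff_Ici, ContinuousWithinAt]
    have t := tendsto_pow_mul_log_pow_nhdsGT_zero (n := k + 1) k.succ_ne_zero
    have h := (((t 2).div_const ((k:ℝ) + 1)).sub
      (((t 1).const_mul 2).div_const (((k:ℝ) + 1) ^ 2))).add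
      (((t 0).const_mul 2).div_const (((k:ℝ) + 1) ^ 3))
    simp only [zero_div, mul_zero, sub_zero, add_zero] at h
    convert h using 2
    · simp only [powMulLogSqPrimitive]; ring
    · simp [powMulLogSqPrimitive]
  · exact (hasDerivAt_powMulLogSqPrimitive k hx).continuousAt.continuousWithinAt

lemma integrableOn_pow_mul_log_sq (k : ℕ) :
    IntegrableOn (fun x : ℝ => x ^ k * log x ^ 2) (Ioc 0 1) :=
  intervalIntegral.integrableOn_deriv_of_nonneg
    ((continuousOn_powMulLogSqPrimitive k).mono Icc_subset_Ici_self)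
    (fun _ hx => hasDerivAt_powMulLogSqPrimitive k hx.1)
    (fun _ hx => mul_nonneg (pow_nonneg hx.1.le k) (sq_nonneg _))

lemma integral_pow_mul_log_sq (k : ℕ) :
    ∫ x in (0:ℝ)..1, x ^ k * log x ^ 2 = 2 / ((k:ℝ) + 1) ^ 3 := by
  rw [intervalIntegral.integral_eq_sub_of_hasDerivAt_of_le zero_le_one
    ((continuousOn_powMulLogSqPrimitive k).mono Icc_subset_Ici_self)
    (fun _ hx => hasDerivAt_powMulLogSqPrimitive k hx.1)
    ((intervalIntegrable_iff_integrableOn_Ioc_of_le zero_le_one).2 (integrableOn_pow_mul_log_sq k))]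
  simp [powMulLogSqPrimitive]

lemma abs_eval_U_le {a : ℝ} (ha : |a| < 1) (n : ℤ) :
    |(U ℝ n).eval a| ≤ (√(1 - a ^ 2))⁻¹ := by
  have hs : 0 < √(1 - a ^ 2) := sqrt_pos.2 (by nlinarith [sq_lt_one_iff_abs_lt_one a |>.2 ha])
  have h := U_real_cos (arccos a) n
  rw [cos_arccos (abs_le.1 ha.le).1 (abs_le.1 ha.le).2, sin_arccos] at h
  rw [← one_div, le_div_iff₀ hs, ← abs_of_pos hs, ← abs_mul, h]
  exact abs_sin_le_one _

lemma hasSum_eval_U_mul_pow {a x : ℝ} (ha : |a| < 1) (hx : |x| < 1) :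
    HasSum (fun k : ℕ => (U ℝ k).eval a * x ^ k) (x ^ 2 - 2 * a * x + 1)⁻¹ := by
  set c : ℕ → ℝ := fun k => (U ℝ k).eval a with hc
  obtain ⟨S, hS⟩ : Summable (fun k => c k * x ^ k) := by
    refine Summable.of_norm_bounded ((summable_geometric_of_lt_one (abs_nonneg x) hx).mul_left
      (√(1 - a ^ 2))⁻¹) fun k => ?_
    rw [norm_mul, norm_pow, Real.norm_eq_abs, Real.norm_eq_abs]
    exact mul_le_mul_of_nonneg_right (abs_eval_U_le ha k) (by positivity)
  have hS1 : HasSum (fun k => c (k + 1) * x ^ (k + 1)) (S - 1) := by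
    simpa [hc] using (hasSum_nat_add_iff' 1).2 hS
  have hS2 : HasSum (fun k => c (k + 2) * x ^ (k + 2)) (S - 1 - 2 * a * x) := by
    simpa [hc, Finset.sum_range_succ, sub_sub] using (hasSum_nat_add_iff' 2).2 hS
  have hrec : HasSum (fun k => c (k + 2) * x ^ (k + 2)) (2 * a * x * (S - 1) - x ^ 2 * S) := by
    refine ((hS1.mul_left (2 * a * x)).sub (hS.mul_left (x ^ 2))).congr_fun fun k => ?_
    simp only [hc, Nat.cast_add, Nat.cast_ofNat, Nat.cast_one, U_add_two, Polynomial.eval_sub,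
      Polynomial.eval_mul, Polynomial.eval_ofNat, Polynomial.eval_X]
    ring
  have hD : S * (x ^ 2 - 2 * a * x + 1) = 1 := by linear_combination hS2.unique hrec
  rwa [eq_inv_of_mul_eq_one_left hD] at hS

lemma integral_Ioo_tsum_mul_pow_mul_log_sq {c : ℕ → ℝ} {C : ℝ} (hc : ∀ k, |c k| ≤ C) :
    ∫ x in Ioo (0:ℝ) 1, ∑' k, c k * (x ^ k * log x ^ 2) =
      ∑' k, c k * (2 / ((k:ℝ) + 1) ^ 3) := by
  have hint (k : ℕ) : IntegrableOn (fun x : ℝ => x ^ k * log x ^ 2) (Ioo 0 1) :=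
    (integrableOn_pow_mul_log_sq k).mono_set Ioo_subset_Ioc_self
  have hval (k : ℕ) : ∫ x in Ioo (0:ℝ) 1, x ^ k * log x ^ 2 = 2 / ((k:ℝ) + 1) ^ 3 := by
    rw [← integral_Ioc_eq_integral_Ioo, ← intervalIntegral.integral_of_le zero_le_one,
      integral_pow_mul_log_sq]
  have hnorm (k : ℕ) : ∫ x in Ioo (0:ℝ) 1, ‖c k * (x ^ k * log x ^ 2)‖ =
      |c k| * (2 / ((k:ℝ) + 1) ^ 3) := by
    rw [← hval, ← integral_const_mul]
    refine setIntegral_congr_fun measurableSet_Ioo fun x hx => ?_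
    rw [norm_mul, Real.norm_eq_abs, Real.norm_of_nonneg (by have := hx.1; positivity)]
  have hsummable : Summable fun k => ∫ x in Ioo (0:ℝ) 1, ‖c k * (x ^ k * log x ^ 2)‖ := by
    have hp : Summable fun k : ℕ => 2 / ((k:ℝ) + 1) ^ 3 := by
      simpa [div_eq_mul_inv] using
        ((summable_nat_add_iff 1).2 (Real.summable_nat_pow_inv.2 (by norm_num : 1 < 3))).mul_left 2
    simp_rw [hnorm]
    exact hp.mul_left C |>.of_nonneg_of_le (fun k => by positivity)
      fun k => mul_le_mul_of_nonneg_right (hc k) (by positivity)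
  rw [← integral_tsum_of_summable_integral_norm (fun k => (hint k).const_mul (c k)) hsummable]
  simp_rw [integral_const_mul, hval]

theorem stmt11 (a : ℝ) (ha : -1 < a) (ha' : a < 1) :
    ∫ x in (0:ℝ)..1, Real.log x ^ 2 / (x ^ 2 - 2 * a * x + 1) =
      2 * ∑' k : ℕ, (Polynomial.Chebyshev.U ℝ k).eval a / ((k : ℝ) + 1) ^ 3 := by
  have ha1 : |a| < 1 := abs_lt.2 ⟨ha, ha'⟩
  have hexpand : ∀ x ∈ Ioo (0:ℝ) 1, log x ^ 2 / (x ^ 2 - 2 * a * x + 1) =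
      ∑' k : ℕ, (U ℝ k).eval a * (x ^ k * log x ^ 2) := fun x hx => by
    have hx1 : |x| < 1 := abs_lt.2 ⟨by linarith [hx.1], hx.2⟩
    rw [div_eq_inv_mul, ← ((hasSum_eval_U_mul_pow ha1 hx1).mul_right (log x ^ 2)).tsum_eq]
    simp_rw [mul_assoc]
  rw [intervalIntegral.integral_of_le zero_le_one, integral_Ioc_eq_integral_Ioo,
    setIntegral_congr_fun measurableSet_Ioo hexpand,
    integral_Ioo_tsum_mul_pow_mul_log_sq fun k => abs_eval_U_le ha1 k, ← tsum_mul_left]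
  congr 1 with k
  ring
end
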